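/- Let U be a consistent fixed point of G. For every sentence A with #A ∈ G(U) ∪ F(U), the Gödel number of the sentence `iff A (neg (Tr (#A)))` belongs to F(U) (i.e., A ↔ ¬T(⌜A⌝) is false). -/

import Mathlib

/-- Sentences of the augmented language 𝓛. -/
inductive Sent (B : Type) : Type where
  | base : B → Sent B
  | Tr : ℕ → Sent B
  | exT : Sent B
  | allT : Sent B
  | neg : Sent B → Sent B
  | or : Sent B → Sent B → Sent B
  | and : Sent B → Sent B → Sent B
  | imp : Sent B → Sent B → Sent B
  | iff : Sent B → Sent B → Sent B

variable {B : Type}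

mutual
/-- `isTrue gn v U A` means `#A ∈ G(U)` according to rules (r1)–(r9). -/
def isTrue (gn : Sent B → ℕ) (v : B → Bool) (U : Set ℕ) : Sent B → Prop
  | .base b => v b = true
  | .Tr n => ∃ A : Sent B, n = gn A ∧ gn A ∈ U
  | .exT => ∃ n : ℕ, ∃ A : Sent B, n = gn A ∧ gn A ∈ U
  | .allT => ∀ n : ℕ, ∃ A : Sent B, n = gn A ∧ gn A ∈ U
  | .neg A => isFalse gn v U A
  | .or A C => isTrue gn v U A ∨ isTrue gn v U C
  | .and A C => isTrue gn v U A ∧ isTrue gn v U C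
  | .imp A C => isFalse gn v U A ∨ isTrue gn v U C
  | .iff A C => (isTrue gn v U A ∧ isTrue gn v U C) ∨ (isFalse gn v U A ∧ isFalse gn v U C)

/-- `isFalse gn v U A` means `#A ∈ F(U)` according to rules (r1)–(r9). -/
def isFalse (gn : Sent B → ℕ) (v : B → Bool) (U : Set ℕ) : Sent B → Prop
  | .base b => v b = false
  | .Tr n => ∃ A : Sent B, n = gn A ∧ gn (.neg A) ∈ U
  | .exT => ∀ n : ℕ, ∃ A : Sent B, n = gn A ∧ gn (.neg A) ∈ U
  | .allT => ∃ n : ℕ, ∃ A : Sent B, n = gn A ∧ gn (.neg A) ∈ U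
  | .neg A => isTrue gn v U A
  | .or A C => isFalse gn v U A ∧ isFalse gn v U C
  | .and A C => isFalse gn v U A ∨ isFalse gn v U C
  | .imp A C => isTrue gn v U A ∧ isFalse gn v U C
  | .iff A C => (isTrue gn v U A ∧ isFalse gn v U C) ∨ (isFalse gn v U A ∧ isTrue gn v U C)
end

/-- `G U`: Gödel numbers of sentences declared true over `U`. -/
def GSet (gn : Sent B → ℕ) (v : B → Bool) (U : Set ℕ) : Set ℕ :=
  { n | ∃ A : Sent B, n = gn A ∧ isTrue gn v U A }

/-- `F U`: Gödel numbers of sentences declared false over `U`. -/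
def FSet (gn : Sent B → ℕ) (v : B → Bool) (U : Set ℕ) : Set ℕ :=
  { n | ∃ A : Sent B, n = gn A ∧ isFalse gn v U A }

/-- `U` is consistent: no sentence has both itself and its negation in `U`. -/
def Consistent (gn : Sent B → ℕ) (U : Set ℕ) : Prop :=
  ¬ ∃ A : Sent B, gn A ∈ U ∧ gn (.neg A) ∈ U

/-! Since `G(U) ⊆ U`, a sentence `A` true over `U` has `#A ∈ U`, so `T(⌜A⌝)` is true too; a
sentence `A` false over `U` has `#(¬A) ∈ G(U) ⊆ U`, so `T(⌜A⌝)` is false too. Either way `A` and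
`¬T(⌜A⌝)` receive opposite values, and (r7) makes the biconditional false. -/

section LiarBiconditional

variable {gn : Sent B → ℕ} {v : B → Bool} {U : Set ℕ} {A : Sent B}

theorem mem_GSet_iff (hgn : Function.Injective gn) : gn A ∈ GSet gn v U ↔ isTrue gn v U A :=
  ⟨fun ⟨_, hA', hA⟩ => hgn hA' ▸ hA, fun hA => ⟨A, rfl, hA⟩⟩

theorem mem_FSet_iff (hgn : Function.Injective gn) : gn A ∈ FSet gn v U ↔ isFalse gn v U A :=
  ⟨fun ⟨_, hA', hA⟩ => hgn hA' ▸ hA, fun hA => ⟨A, rfl, hA⟩⟩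

theorem isTrue_Tr_of_isTrue (hGU : GSet gn v U ⊆ U) (hA : isTrue gn v U A) :
    isTrue gn v U (.Tr (gn A)) :=
  ⟨A, rfl, hGU ⟨A, rfl, hA⟩⟩

theorem isFalse_Tr_of_isFalse (hGU : GSet gn v U ⊆ U) (hA : isFalse gn v U A) :
    isFalse gn v U (.Tr (gn A)) :=
  ⟨A, rfl, hGU ⟨.neg A, rfl, hA⟩⟩

theorem isFalse_iff_neg_Tr_self (hGU : GSet gn v U ⊆ U)
    (hA : isTrue gn v U A ∨ isFalse gn v U A) :
    isFalse gn v U (.iff A (.neg (.Tr (gn A)))) :=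
  hA.imp (fun hT => ⟨hT, isTrue_Tr_of_isTrue hGU hT⟩)
    (fun hF => ⟨hF, isFalse_Tr_of_isFalse hGU hF⟩)

end LiarBiconditional

/-- for every sentence `A` of `𝓛_U`, `A ↔ ¬T(⌜A⌝)` is false. -/
theorem stmt_10 {B : Type} (gn : Sent B → ℕ) (hgn : Function.Injective gn)
    (v : B → Bool) (U : Set ℕ) (hU : Consistent gn U) (hfix : GSet gn v U = U)
    (A : Sent B) (hA : gn A ∈ GSet gn v U ∪ FSet gn v U) :
    gn (Sent.iff A (.neg (.Tr (gn A)))) ∈ FSet gn v U := by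
  refine (mem_FSet_iff hgn).2 (isFalse_iff_neg_Tr_self hfix.subset ?_)
  exact hA.imp (mem_GSet_iff hgn).1 (mem_FSet_iff hgn).1
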